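/- Let A = kQ/I be monomial quadratic with comparison morphisms μ_• and ω_• between the Bardzell resolution M_• and the reduced bar resolution R_• defined on generators by μ_n(1 ⊗ α₁⋯αₙ ⊗ 1) = 1 ⊗ α₁ ⊗ ⋯ ⊗ αₙ ⊗ 1 and ω_n(1 ⊗ p ⊗ 1) = u ⊗ v ⊗ w if p = uvw with v ∈ Γⁿ and u of minimal length, and 0 otherwise. Then ω_• ∘ μ_• is the identity on M_•. -/

import Mathlib

open scoped Classical

/-- A finite-type-free presentation of a quiver: vertices, arrows, source and target. -/
structure Quiv where
  V : Type
  E : Type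
  s : E → V
  t : E → V

namespace Quiv

variable (Q : Quiv)

/-- A (composable) path, given as the list of its arrows. -/
def IsPath (l : List Q.E) : Prop := l.Chain' (fun a b => Q.t a = Q.s b)

/-- A Γ-path for the set of monomial quadratic relations `R`:
a composable sequence of arrows each consecutive pair of which lies in `R`. -/
def GammaPath (R : Set (List Q.E)) (l : List Q.E) : Prop :=
  l.Chain' (fun a b => Q.t a = Q.s b ∧ [a, b] ∈ R)

/-- The list of arrows `l` starts at the vertex `x`. -/
def StartsAt (x : Q.V) (l : List Q.E) : Prop := ∀ h : l ≠ [], Q.s (l.head h) = x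

/-- The list of arrows `l` ends at the vertex `y`. -/
def EndsAt (y : Q.V) (l : List Q.E) : Prop := ∀ h : l ≠ [], Q.t (l.getLast h) = y

/-- `l` is a path from `x` to `y` (a stationary path when `l = []`). -/
def FromTo (x y : Q.V) (l : List Q.E) : Prop :=
  IsPath Q l ∧ StartsAt Q x l ∧ EndsAt Q y l ∧ (l = [] → x = y)

/-- An allowed path: a composable path no consecutive pair of which lies in the
set of quadratic monomial relations `R`; these are exactly the paths which are
nonzero in the quadratic monomial algebra `kQ/⟨R⟩`. -/
def Allowed (R : Set (List Q.E)) (l : List Q.E) : Prop :=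
  l.Chain' (fun a b => Q.t a = Q.s b ∧ [a, b] ∉ R)

/-- The composition `u ∘_{s,r} v = α₁⋯α_{s-1} β₁⋯βₘ α_r⋯αₙ` of the paths
`u = α₁⋯αₙ` and `v = β₁⋯βₘ` at the (1-indexed) positions `s ≤ r`. -/
def compSR (u v : List Q.E) (s r : ℕ) : List Q.E := u.take (s - 1) ++ v ++ u.drop (r - 1)

/-- The composition `u ∘_s v` at position `s`, i.e. `u ∘_{s,s+1} v`: replace the `s`-th
arrow of `u` by the path `v`. -/
def compS (u v : List Q.E) (s : ℕ) : List Q.E := u.take (s - 1) ++ v ++ u.drop s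

/-- `(u,v)` is an `(s,r)` Γ-bypass. -/
def IsBypassSR (R : Set (List Q.E)) (u v : List Q.E) (s r : ℕ) : Prop :=
  1 ≤ s ∧ s ≤ r ∧ r ≤ u.length ∧ GammaPath Q R (compSR Q u v s r)

/-- `(u,v)` is an `(s,s+1)` Γ-bypass. -/
def IsBypass (R : Set (List Q.E)) (u v : List Q.E) (s : ℕ) : Prop :=
  1 ≤ s ∧ s ≤ u.length ∧ GammaPath Q R (compS Q u v s)

end Quiv
namespace Quiv

/-- A presentation of the quadratic monomial algebra `A = kQ/⟨R⟩`: the images `e v` of the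
stationary paths (a complete family of orthogonal idempotents) and the images `ι a` of the
arrows, satisfying the quiver compatibilities and killing the monomial relations of `R`. -/
structure MonPres (Q : Quiv) (R : Set (List Q.E)) (k A : Type)
    [Field k] [Ring A] [Algebra k A] where
  e : Q.V → A
  ι : Q.E → A
  idem : ∀ v, e v * e v = e v
  orth : ∀ v w, v ≠ w → e v * e w = 0
  src : ∀ a, e (Q.s a) * ι a = ι a
  tgt : ∀ a, ι a * e (Q.t a) = ι a
  rel : ∀ l ∈ R, (l.map ι).prod = 0

variable {Q : Quiv} {R : Set (List Q.E)} {k A : Type} [Field k] [Ring A] [Algebra k A]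

/-- The image in `A` of a path given by its list of arrows. -/
def MonPres.pathProd (P : MonPres Q R k A) (l : List Q.E) : A := (l.map P.ι).prod

/-- The image in `A` of a path starting at a given vertex (so the image of a stationary
path at `v` is the idempotent `e v`). -/
def MonPres.pathVal (P : MonPres Q R k A) (z : Q.V × List Q.E) : A :=
  P.e z.1 * P.pathProd z.2

/-- The (classes of the) nonzero paths form a `k`-basis of `A`: this characterizes the
quadratic monomial algebra `kQ/⟨R⟩` among the algebras with a presentation as above. -/
def MonPres.HasPathBasis (P : MonPres Q R k A) : Prop :=
  ∃ b : Module.Basis {z : Q.V × List Q.E // Q.Allowed R z.2 ∧ Q.StartsAt z.1 z.2} k A,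
    ∀ z, b z = P.pathVal z.1

end Quiv

namespace Quiv

open TensorProduct

variable {Q : Quiv} {R : Set (List Q.E)} {k A : Type} [Field k] [Ring A] [Algebra k A]

/-- The comparison morphism `μ_•` from the Bardzell resolution (graded pieces
`A ⊗ kΓⁿ ⊗ A`, a generator `a ⊗ α₁⋯αₙ ⊗ b` being encoded as `single [α₁,…,αₙ] (a ⊗ b)`)
to the reduced bar resolution (graded pieces `A ⊗ r^{⊗n} ⊗ A`, a generator
`a ⊗ p₁ ⊗ ⋯ ⊗ pₙ ⊗ b` on basic tensors of paths being encoded as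
`single [p₁,…,pₙ] (a ⊗ b)`): `μ_n(1 ⊗ α₁⋯αₙ ⊗ 1) = 1 ⊗ α₁ ⊗ ⋯ ⊗ αₙ ⊗ 1`. -/
noncomputable def MonPres.compMu (_P : MonPres Q R k A) :
    (List Q.E →₀ (A ⊗[k] A)) →ₗ[k] (List (List Q.E) →₀ (A ⊗[k] A)) :=
  Finsupp.lsum k fun u => Finsupp.lsingle (u.map fun a => [a])

/-- The comparison morphism `ω_•` from the reduced bar resolution to the Bardzell
resolution: on a generator `1 ⊗ p₁ ⊗ ⋯ ⊗ pₙ ⊗ 1`, with `p = p₁⋯pₙ` the concatenated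
path, it is `u ⊗ v ⊗ w` if `p` decomposes as `p = uvw` with `v ∈ Γⁿ` and `u` of minimal
length, and `0` otherwise. -/
noncomputable def MonPres.compOmega (P : MonPres Q R k A) (R' : Set (List Q.E)) :
    (List (List Q.E) →₀ (A ⊗[k] A)) →ₗ[k] (List Q.E →₀ (A ⊗[k] A)) :=
  Finsupp.lsum k fun ps =>
    if h : ∃ j, j + ps.length ≤ ps.flatten.length ∧
        Q.GammaPath R' ((ps.flatten.drop j).take ps.length) then
      (Finsupp.lsingle (((ps.flatten.drop (Nat.find h)).take ps.length))).comp
        (TensorProduct.map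
          (LinearMap.mulRight k (P.pathProd (ps.flatten.take (Nat.find h))))
          (LinearMap.mulLeft k (P.pathProd (ps.flatten.drop (Nat.find h + ps.length)))))
    else 0

/-- For a quadratic monomial algebra, the comparison morphisms `μ_•`
and `ω_•` between the Bardzell minimal resolution and the reduced bar resolution satisfy
`ω_• ∘ μ_• = 1` (computed here on the generators `a ⊗ u ⊗ b`, `u ∈ Γⁿ`, of the Bardzell
resolution). -/
theorem compOmega_comp_compMu
    (Q : Quiv) (R : Set (List Q.E)) (hR : ∀ l ∈ R, l.length = 2)
    (k A : Type) [Field k] [Ring A] [Algebra k A]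
    (P : MonPres Q R k A)
    (u : List Q.E) (hu : Q.GammaPath R u) (a b : A) :
    P.compOmega R (P.compMu (Finsupp.single u (a ⊗ₜ[k] b))) =
      Finsupp.single u (a ⊗ₜ[k] b) := by
  have hflat : (u.map fun a => [a]).flatten = u := by
    clear hu
    induction u with
    | nil => rfl
    | cons x xs ih => simp [List.flatten_cons, ih]
  have hlen : (u.map fun a => [a]).length = u.length := by simp
  have hμ : P.compMu (Finsupp.single u (a ⊗ₜ[k] b)) =
      Finsupp.single (u.map fun a => [a]) (a ⊗ₜ[k] b) := by
    simp [MonPres.compMu, Finsupp.lsum_single]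
  rw [hμ]
  rw [MonPres.compOmega, Finsupp.lsum_single]
  set ps := u.map fun a => [a] with hps
  have hex : ∃ j, j + ps.length ≤ ps.flatten.length ∧
      Q.GammaPath R ((ps.flatten.drop j).take ps.length) := by
    refine ⟨0, ?_, ?_⟩
    · simp [hflat, hlen]
    · simpa [hflat, hlen] using hu
  rw [dif_pos hex]
  have hfind : Nat.find hex = 0 := by
    rw [Nat.find_eq_zero]
    constructor
    · simp [hflat, hlen]
    · simpa [hflat, hlen] using hu
  rw [hfind]
  have hp0 : P.pathProd [] = 1 := by simp [MonPres.pathProd]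
  simp [hflat, hlen, hp0, MonPres.pathProd]

end Quiv
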